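/- Let I be a finite index set, k ∈ I, and (b_i)_{i∈I} integers with b_k = 0 and (b_i)_{i≠k} not all zero. In the fraction field of ℤ[x_i : i ∈ I], set y := ∏_i x_i^{b_i} and x_k' := (∏_i x_i^{[b_i]_+} + ∏_i x_i^{[-b_i]_+})/x_k. Let d ∈ ℕ and let p ∈ ℤ[u] be a polynomial with constant term p(0) = 1, degree exactly d, and leading coefficient 1. If the element z := x_k^{−d}·(∏_i x_i^{d·[−b_i]_+})·p(y) belongs to the subring ℤ[(x_k')^{±1}, x_i^{±1} (i ≠ k)] of the fraction field, then p(u) = (1 + u)^d and z = (x_k')^d. (Classical form of 'compatibility implies admissibility': an element of the upper cluster algebra that is pointed and copointed like the cluster monomial (X_k')^d must equal (X_k')^d.) -/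

import Mathlib

open Polynomial in
lemma lemA (d e N : ℕ) (he : 1 ≤ e) (q G' : Polynomial ℤ)
    (h0 : q.coeff 0 = 1) (hdeg : q.natDegree = d) (hlead : q.coeff d = 1)
    (h : X ^ N * q.comp (X ^ e) = G' * (X ^ e + 1) ^ d) :
    q = (1 + X) ^ d := by
  have hXN : (X : ℤ[X]) ^ N ≠ 0 := pow_ne_zero _ X_ne_zero
  have hq0 : q ≠ 0 := fun h' => by simp [h'] at h0
  have hce : (q.comp (X ^ e)).coeff 0 = 1 := by
    rw [coeff_zero_eq_eval_zero, eval_comp]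
    simp [zero_pow (by omega : e ≠ 0), ← coeff_zero_eq_eval_zero, h0]
  have hcomp0 : q.comp (X ^ e) ≠ 0 := fun hc => by simp [hc] at hce
  have hM : ((X : ℤ[X]) ^ e + 1).Monic := by
    apply Polynomial.monic_X_pow_add (n := e) (p := (1 : ℤ[X]))
    rw [degree_one]
    exact_mod_cast he
  have hMne : ((X : ℤ[X]) ^ e + 1) ≠ 0 := hM.ne_zero
  have hMd : (((X : ℤ[X]) ^ e + 1) ^ d).Monic := hM.pow d
  have hG0 : G' ≠ 0 := by
    intro h'
    rw [h', zero_mul] at h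
    rcases mul_eq_zero.mp h with h | h
    · exact hXN h
    · exact hcomp0 h
  have hdegMe : ((X : ℤ[X]) ^ e + 1).natDegree = e := by
    rw [← C_1, natDegree_X_pow_add_C]
  have hdegcomp : (q.comp (X ^ e)).natDegree = d * e := by
    rw [natDegree_comp, hdeg, natDegree_X_pow]
  -- degree comparison
  have hdegs := congrArg natDegree h
  rw [natDegree_mul hXN hcomp0, natDegree_mul hG0 hMd.ne_zero, natDegree_X_pow,
    hdegcomp, natDegree_pow, hdegMe] at hdegs
  have hdG : G'.natDegree = N := by omega
  -- trailing degree comparison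
  have hMc0 : (((X : ℤ[X]) ^ e + 1) ^ d).coeff 0 = 1 := by
    rw [coeff_zero_eq_eval_zero]
    simp [zero_pow (by omega : e ≠ 0)]
  have htd1 : (q.comp (X ^ e)).natTrailingDegree = 0 :=
    natTrailingDegree_eq_zero.mpr (Or.inr (by rw [hce]; exact one_ne_zero))
  have htd2 : (((X : ℤ[X]) ^ e + 1) ^ d).natTrailingDegree = 0 :=
    natTrailingDegree_eq_zero.mpr (Or.inr (by rw [hMc0]; exact one_ne_zero))
  have htds := congrArg natTrailingDegree h
  rw [natTrailingDegree_mul hXN hcomp0, natTrailingDegree_mul hG0 hMd.ne_zero,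
    X_pow_eq_monomial, natTrailingDegree_monomial (one_ne_zero), htd1, htd2] at htds
  have htdG : G'.natTrailingDegree = N := by omega
  -- G' = C u * X ^ N
  have hG'eq : G' = C (G'.coeff N) * X ^ N := by
    ext j
    rcases lt_trichotomy j N with hj | hj | hj
    · rw [coeff_eq_zero_of_lt_natTrailingDegree (htdG ▸ hj)]
      simp [coeff_X_pow, Nat.ne_of_lt hj]
    · subst hj; simp [coeff_X_pow]
    · rw [coeff_eq_zero_of_natDegree_lt (hdG ▸ hj)]
      simp [coeff_X_pow, Nat.ne_of_gt hj]
  -- leading coefficient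
  have hlcq : q.leadingCoeff = 1 := by rw [leadingCoeff, hdeg, hlead]
  have hlcs := congrArg leadingCoeff h
  rw [leadingCoeff_mul, leadingCoeff_mul, leadingCoeff_X_pow, one_mul,
    leadingCoeff_comp (by rw [natDegree_X_pow]; omega), hlcq, leadingCoeff_X_pow,
    one_pow, mul_one, hMd.leadingCoeff, mul_one] at hlcs
  have hcN : G'.coeff N = 1 := by rw [← hdG]; exact hlcs.symm
  rw [hG'eq, hcN, map_one, one_mul] at h
  have hcompeq : q.comp (X ^ e) = ((X : ℤ[X]) ^ e + 1) ^ d := by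
    exact mul_left_cancel₀ hXN h
  have hsub : (q - (1 + X) ^ d).comp (X ^ e) = 0 := by
    rw [sub_comp, hcompeq]
    simp [add_comp, one_comp, X_comp, pow_comp, add_comm]
  rcases comp_eq_zero_iff.mp hsub with h' | ⟨-, h'⟩
  · exact sub_eq_zero.mp h'
  · exfalso
    rw [coeff_X_pow, if_neg (by omega : ¬ 0 = e), map_zero] at h'
    exact pow_ne_zero e X_ne_zero h'

open Polynomial in
lemma lemS (d e : ℕ) (q : Polynomial ℤ) (hq : q.natDegree < d + 1) :
    q.comp (X ^ e) = ∑ j ∈ Finset.range (d + 1), C (q.coeff j) * X ^ (e * j) := by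
  rw [comp, eval₂_eq_sum_range' C hq]
  exact Finset.sum_congr rfl fun j _ => by rw [← pow_mul]

open Polynomial in
lemma lemReflect (d : ℕ) (p : Polynomial ℤ) (hdeg : p.natDegree ≤ d)
    (h : Polynomial.reflect d p = (1 + X) ^ d) : p = (1 + X) ^ d := by
  ext j
  rw [coeff_one_add_X_pow]
  by_cases hj : j ≤ d
  · have h1 : p.coeff j = (reflect d p).coeff (d - j) := by
      rw [coeff_reflect, revAt_le (Nat.sub_le d j)]
      congr 1; omega
    rw [h1, h, coeff_one_add_X_pow, Nat.choose_symm hj]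
  · rw [coeff_eq_zero_of_natDegree_lt (by omega), Nat.choose_eq_zero_of_lt (by omega)]
    simp

noncomputable section

/-- The ambient fraction field `K` of the polynomial ring `ℤ[x_i : i ∈ I]`. -/
abbrev K (I : Type) : Type := FractionRing (MvPolynomial I ℤ)

/-- The variable `x_i` inside `K I`. -/
def x (I : Type) (i : I) : K I :=
  algebraMap (MvPolynomial I ℤ) (K I) (MvPolynomial.X i)

set_option maxHeartbeats 8000000 in
set_option synthInstance.maxHeartbeats 400000 in
theorem compatibly_pointed_implies_cluster_monomial
    (I : Type) [Fintype I] [DecidableEq I] (k : I) (b : I → ℤ)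
    (hbk : b k = 0) (hb : ∃ i : I, i ≠ k ∧ b i ≠ 0) (d : ℕ)
    (y x' : K I)
    (hy : y = ∏ i : I, x I i ^ b i)
    (hx' : x' = ((∏ i : I, x I i ^ max (b i) 0) +
                 (∏ i : I, x I i ^ max (-b i) 0)) / x I k)
    (p : Polynomial ℤ)
    (hp0 : p.coeff 0 = 1) (hpdeg : p.natDegree = d) (hplead : p.coeff d = 1)
    (z : K I)
    (hz : z = x I k ^ (-(d : ℤ)) * (∏ i : I, x I i ^ ((d : ℤ) * max (-b i) 0)) *
              Polynomial.aeval y p)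
    (hmem : z ∈ Subring.closure
      ({x', x'⁻¹} ∪ {w | ∃ i : I, i ≠ k ∧ (w = x I i ∨ w = (x I i)⁻¹)})) :
    p = (1 + Polynomial.X) ^ d ∧ z = x' ^ d := by
  classical
  obtain ⟨i1, hi1k, hbi1⟩ := hb
  have hinj : Function.Injective (algebraMap (MvPolynomial I ℤ) (K I)) :=
    IsFractionRing.injective _ _
  have hx0 : ∀ i : I, x I i ≠ 0 := by
    intro i h
    apply MvPolynomial.X_ne_zero (R := ℤ) i
    apply hinj
    rw [map_zero]
    exact h
  -- exponent data
  set ea : I → ℕ := fun i => (max (b i) 0).toNat with hea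
  set ec : I → ℕ := fun i => (max (-b i) 0).toNat with hec
  have heak : ea k = 0 := by simp [hea, hbk]
  have heck : ec k = 0 := by simp [hec, hbk]
  set A₀ : MvPolynomial I ℤ := ∏ i : I, MvPolynomial.X i ^ ea i with hA₀
  set B₀ : MvPolynomial I ℤ := ∏ i : I, MvPolynomial.X i ^ ec i with hB₀
  set A : K I := algebraMap (MvPolynomial I ℤ) (K I) A₀ with hA
  set B : K I := algebraMap (MvPolynomial I ℤ) (K I) B₀ with hB
  have hmapprod : ∀ f : I → ℕ,
      algebraMap (MvPolynomial I ℤ) (K I) (∏ i : I, MvPolynomial.X i ^ f i)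
        = ∏ i : I, x I i ^ f i := by
    intro f
    rw [map_prod]
    exact Finset.prod_congr rfl fun i _ => by rw [map_pow]; rfl
  have hAz : A = ∏ i : I, x I i ^ max (b i) 0 := by
    rw [hA, hA₀, hmapprod]
    refine Finset.prod_congr rfl fun i _ => ?_
    rw [← zpow_natCast, hea, Int.toNat_of_nonneg (le_max_right _ _)]
  have hBz : B = ∏ i : I, x I i ^ max (-b i) 0 := by
    rw [hB, hB₀, hmapprod]
    refine Finset.prod_congr rfl fun i _ => ?_
    rw [← zpow_natCast, hec, Int.toNat_of_nonneg (le_max_right _ _)]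
  have hx'k : x' * x I k = A + B := by
    rw [hx', ← hAz, ← hBz, div_mul_cancel₀ _ (hx0 k)]
  have hevalones : ∀ f : I → ℕ,
      MvPolynomial.eval (fun _ : I => (1 : ℤ)) (∏ i : I, MvPolynomial.X i ^ f i) = 1 := by
    intro f; rw [map_prod]; simp
  have hABne : A + B ≠ 0 := by
    intro h
    have h2 : A₀ + B₀ = 0 := hinj (by rw [map_add, ← hA, ← hB, h, map_zero])
    have h3 := congrArg (MvPolynomial.eval (fun _ : I => (1 : ℤ))) h2
    rw [map_add, hA₀, hB₀, hevalones, hevalones, map_zero] at h3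
    norm_num at h3
  have hBne : B ≠ 0 := by
    intro h
    have h2 : B₀ = 0 := hinj (by rw [← hB, h, map_zero])
    have h3 := congrArg (MvPolynomial.eval (fun _ : I => (1 : ℤ))) h2
    rw [hB₀, hevalones, map_zero] at h3
    norm_num at h3
  have hx'0 : x' ≠ 0 := fun h => hABne (by rw [← hx'k, h, zero_mul])
  -- the coefficient ring of the adjacent seed
  set κ : MvPolynomial {i : I // i ≠ k} ℤ →+* K I :=
    (algebraMap (MvPolynomial I ℤ) (K I)).comp
      (MvPolynomial.rename (Subtype.val : {i : I // i ≠ k} → I)).toRingHom with hκ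
  have hκX : ∀ j : {i : I // i ≠ k}, κ (MvPolynomial.X j) = x I j.1 := by
    intro j; simp [hκ, MvPolynomial.rename_X, x]
  have hκprod : ∀ s : Finset {i : I // i ≠ k},
      κ (∏ j ∈ s, MvPolynomial.X j) = ∏ j ∈ s, x I j.1 := by
    intro s; rw [map_prod]; exact Finset.prod_congr rfl fun j _ => hκX j
  set Q : K I := ∏ j : {i : I // i ≠ k}, x I j.1 with hQdef
  have hQ0 : Q ≠ 0 := Finset.prod_ne_zero_iff.mpr fun j _ => hx0 j.1
  set E : Polynomial (MvPolynomial {i : I // i ≠ k} ℤ) →+* K I :=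
    Polynomial.eval₂RingHom κ x' with hE
  have hEX : E Polynomial.X = x' := Polynomial.eval₂_X _ _
  have hEC : ∀ c, E (Polynomial.C c) = κ c := fun c => Polynomial.eval₂_C _ _
  have hEXQ : E (Polynomial.X * Polynomial.C (∏ j : {i : I // i ≠ k}, MvPolynomial.X j))
      = x' * Q := by rw [map_mul, hEX, hEC, hκprod]
  -- the subring of Laurent-representable elements
  set T : Subring (K I) :=
    { carrier := {w : K I | ∃ (N : ℕ) (F : Polynomial (MvPolynomial {i : I // i ≠ k} ℤ)),
        (x' * Q) ^ N * w = E F}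
      zero_mem' := ⟨0, 0, by simp⟩
      one_mem' := ⟨0, 1, by simp⟩
      add_mem' := by
        rintro a b ⟨N1, F1, h1⟩ ⟨N2, F2, h2⟩
        refine ⟨N1 + N2,
          (Polynomial.X * Polynomial.C (∏ j : {i : I // i ≠ k}, MvPolynomial.X j)) ^ N2 * F1 +
          (Polynomial.X * Polynomial.C (∏ j : {i : I // i ≠ k}, MvPolynomial.X j)) ^ N1 * F2, ?_⟩
        rw [map_add, map_mul, map_mul, map_pow, map_pow, hEXQ, ← h1, ← h2]
        ring
      neg_mem' := by
        rintro a ⟨N1, F1, h1⟩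
        exact ⟨N1, -F1, by rw [map_neg, ← h1]; ring⟩
      mul_mem' := by
        rintro a b ⟨N1, F1, h1⟩ ⟨N2, F2, h2⟩
        exact ⟨N1 + N2, F1 * F2, by rw [map_mul, ← h1, ← h2]; ring⟩ } with hT
  have hzT : z ∈ T := by
    refine Subring.closure_le.mpr ?_ hmem
    rintro w (hw | ⟨i, hik, hw | hw⟩)
    · rcases hw with hw | hw
      · exact ⟨0, Polynomial.X, by simp [hw, hEX]⟩
      · simp only [Set.mem_singleton_iff] at hw
        refine ⟨1, Polynomial.C (∏ j : {i : I // i ≠ k}, MvPolynomial.X j), ?_⟩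
        rw [hEC, hκprod, hw, pow_one, mul_comm x' Q, mul_assoc, mul_inv_cancel₀ hx'0, mul_one]
    · exact ⟨0, Polynomial.C (MvPolynomial.X ⟨i, hik⟩), by rw [hEC, hκX, hw, pow_zero, one_mul]⟩
    · refine ⟨1, Polynomial.X * Polynomial.C
        (∏ j ∈ Finset.univ.erase (⟨i, hik⟩ : {i : I // i ≠ k}), MvPolynomial.X j), ?_⟩
      rw [map_mul, hEX, hEC, hκprod, hw, pow_one]
      have hQsplit : Q = x I i * ∏ j ∈ Finset.univ.erase (⟨i, hik⟩ : {i : I // i ≠ k}), x I j.1 :=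
        (Finset.mul_prod_erase Finset.univ _ (Finset.mem_univ (⟨i, hik⟩ : {i : I // i ≠ k}))).symm
      rw [hQsplit, mul_inv_eq_iff_eq_mul₀ (hx0 i)]
      ring
  obtain ⟨N, F, hNF⟩ := hzT
  set n := F.natDegree with hn
  -- homogenization of p
  set Phat : MvPolynomial I ℤ :=
    ∑ j ∈ Finset.range (d + 1), MvPolynomial.C (p.coeff j) * A₀ ^ j * B₀ ^ (d - j) with hPhat
  have hyAB : y = A * B⁻¹ := by
    rw [hy, hAz, hBz, ← Finset.prod_inv_distrib, ← Finset.prod_mul_distrib]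
    refine Finset.prod_congr rfl fun i _ => ?_
    rw [← zpow_neg, ← zpow_add₀ (hx0 i)]
    congr 1
    omega
  have hAyB : A = y * B := by
    rw [hyAB, mul_assoc, inv_mul_cancel₀ hBne, mul_one]
  have hxkd : x I k ^ (-(d : ℤ)) * x I k ^ d = 1 := by
    rw [zpow_neg, zpow_natCast, inv_mul_cancel₀ (pow_ne_zero d (hx0 k))]
  have hPi : (∏ i : I, x I i ^ ((d : ℤ) * max (-b i) 0)) = B ^ d := by
    rw [hBz, ← Finset.prod_pow]
    refine Finset.prod_congr rfl fun i _ => ?_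
    rw [← zpow_natCast (x I i ^ max (-(b i)) 0) d, ← zpow_mul, mul_comm]
  have haev : Polynomial.aeval y p = ∑ j ∈ Finset.range (d + 1), (p.coeff j : K I) * y ^ j := by
    rw [Polynomial.aeval_eq_sum_range' (by omega : p.natDegree < d + 1)]
    exact Finset.sum_congr rfl fun j _ => by rw [Algebra.smul_def, eq_intCast]
  have hzxk : z * x I k ^ d = B ^ d * Polynomial.aeval y p := by
    rw [hz, hPi]
    linear_combination (B ^ d * Polynomial.aeval y p) * hxkd
  have hzP : algebraMap (MvPolynomial I ℤ) (K I) Phat = z * x I k ^ d := by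
    rw [hzxk, hPhat, map_sum, haev, Finset.mul_sum]
    refine Finset.sum_congr rfl fun j hj => ?_
    have hjd : j ≤ d := by
      simp only [Finset.mem_range] at hj
      omega
    have hc : algebraMap (MvPolynomial I ℤ) (K I) (MvPolynomial.C (p.coeff j))
        = (p.coeff j : K I) :=
      eq_intCast ((algebraMap (MvPolynomial I ℤ) (K I)).comp
        (MvPolynomial.C : ℤ →+* MvPolynomial I ℤ)) (p.coeff j)
    rw [map_mul, map_mul, map_pow, map_pow, ← hA, ← hB, hc, hAyB, mul_pow]
    have hBj : B ^ j * B ^ (d - j) = B ^ d := by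
      rw [← pow_add]
      congr 1
      omega
    linear_combination ((p.coeff j : K I) * y ^ j) * hBj
  -- transfer the Laurent identity to the polynomial ring
  set Q₁ : MvPolynomial I ℤ := ∏ j : {i : I // i ≠ k}, MvPolynomial.X j.1 with hQ₁
  have hφQ₁ : algebraMap (MvPolynomial I ℤ) (K I) Q₁ = Q := by
    rw [hQ₁, map_prod, hQdef]
    rfl
  have hEFsum : E F = ∑ m ∈ Finset.range (n + 1), κ (F.coeff m) * x' ^ m := by
    rw [hE]
    exact Polynomial.eval₂_eq_sum_range' κ (by omega) x'
  have hxm : ∀ m : ℕ, x' ^ m * x I k ^ m = (A + B) ^ m := by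
    intro m
    rw [← mul_pow, hx'k]
  have e1 : (x' * Q) ^ N * z * x I k ^ (N + d + n)
      = (A + B) ^ N * Q ^ N * (z * x I k ^ d) * x I k ^ n := by
    rw [← hxm N, pow_add, pow_add, mul_pow]
    ring
  have e2 : (x' * Q) ^ N * z * x I k ^ (N + d + n)
      = ∑ m ∈ Finset.range (n + 1),
          κ (F.coeff m) * (A + B) ^ m * x I k ^ (N + d + n - m) := by
    rw [hNF, hEFsum, Finset.sum_mul]
    refine Finset.sum_congr rfl fun m hm => ?_
    have hm' : m ≤ n := by
      simp only [Finset.mem_range] at hm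
      omega
    have hsplit : x I k ^ (N + d + n) = x I k ^ m * x I k ^ (N + d + n - m) := by
      rw [← pow_add]
      congr 1
      omega
    rw [hsplit, ← hxm m]
    ring
  have hRid : (A₀ + B₀) ^ N * Q₁ ^ N * Phat * MvPolynomial.X k ^ n =
      ∑ m ∈ Finset.range (n + 1),
        MvPolynomial.rename (Subtype.val : {i : I // i ≠ k} → I) (F.coeff m) * (A₀ + B₀) ^ m *
          MvPolynomial.X k ^ (N + d + n - m) := by
    apply hinj
    have eL : algebraMap (MvPolynomial I ℤ) (K I)
        ((A₀ + B₀) ^ N * Q₁ ^ N * Phat * MvPolynomial.X k ^ n)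
        = (A + B) ^ N * Q ^ N * (z * x I k ^ d) * x I k ^ n := by
      rw [map_mul, map_mul, map_mul, map_pow, map_pow, map_pow, map_add, ← hA, ← hB, hφQ₁, hzP]
      rfl
    have eR : algebraMap (MvPolynomial I ℤ) (K I)
        (∑ m ∈ Finset.range (n + 1),
          MvPolynomial.rename (Subtype.val : {i : I // i ≠ k} → I) (F.coeff m) * (A₀ + B₀) ^ m *
            MvPolynomial.X k ^ (N + d + n - m))
        = ∑ m ∈ Finset.range (n + 1),
            κ (F.coeff m) * (A + B) ^ m * x I k ^ (N + d + n - m) := by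
      rw [map_sum]
      refine Finset.sum_congr rfl fun m _ => ?_
      rw [map_mul, map_mul, map_pow, map_pow, map_add, ← hA, ← hB]
      rfl
    rw [eL, eR, ← e1]
    exact e2
  -- extract the coefficient of X_k ^ n
  set θ : MvPolynomial I ℤ →+* Polynomial (MvPolynomial I ℤ) :=
    MvPolynomial.eval₂Hom (Polynomial.C.comp MvPolynomial.C)
      (fun i => if i = k then Polynomial.X else Polynomial.C (MvPolynomial.X i)) with hθ
  have θX : ∀ i : I, θ (MvPolynomial.X i)
      = if i = k then Polynomial.X else Polynomial.C (MvPolynomial.X i) :=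
    fun i => MvPolynomial.eval₂Hom_X' _ _ _
  have θC : ∀ c : ℤ, θ (MvPolynomial.C c) = Polynomial.C (MvPolynomial.C c) :=
    fun c => MvPolynomial.eval₂Hom_C _ _ _
  have θfree : ∀ f : I → ℕ, f k = 0 → θ (∏ i : I, MvPolynomial.X i ^ f i)
      = Polynomial.C (∏ i : I, MvPolynomial.X i ^ f i) := by
    intro f hf
    rw [map_prod, map_prod]
    refine Finset.prod_congr rfl fun i _ => ?_
    rw [map_pow, map_pow, θX]
    by_cases hik : i = k
    · subst hik
      rw [hf, pow_zero, pow_zero]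
    · rw [if_neg hik]
  have θA : θ A₀ = Polynomial.C A₀ := by rw [hA₀]; exact θfree ea heak
  have θB : θ B₀ = Polynomial.C B₀ := by rw [hB₀]; exact θfree ec heck
  have θP : θ Phat = Polynomial.C Phat := by
    rw [hPhat, map_sum, map_sum]
    refine Finset.sum_congr rfl fun j _ => ?_
    rw [map_mul, map_mul, map_pow, map_pow, θA, θB, θC, ← map_pow, ← map_pow, ← map_mul,
      ← map_mul]
  have θren : ∀ g : MvPolynomial {i : I // i ≠ k} ℤ,
      θ (MvPolynomial.rename (Subtype.val : {i : I // i ≠ k} → I) g)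
        = Polynomial.C (MvPolynomial.rename (Subtype.val : {i : I // i ≠ k} → I) g) := by
    intro g
    induction g using MvPolynomial.induction_on with
    | C c => rw [MvPolynomial.rename_C, θC]
    | add f g hf hg => rw [map_add, map_add, hf, hg, map_add]
    | mul_X f j hf => rw [map_mul, map_mul, hf, MvPolynomial.rename_X, θX, if_neg j.2, map_mul]
  have θQ₁ : θ Q₁ = Polynomial.C Q₁ := by
    rw [hQ₁, map_prod, map_prod]
    refine Finset.prod_congr rfl fun j _ => ?_
    rw [θX, if_neg j.2]
  have θXk : θ (MvPolynomial.X k) = Polynomial.X := by rw [θX, if_pos rfl]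
  have hkey : (A₀ + B₀) ^ N * Q₁ ^ N * Phat
      = MvPolynomial.rename (Subtype.val : {i : I // i ≠ k} → I) (F.coeff (N + d)) *
          (A₀ + B₀) ^ (N + d) := by
    have hco := congrArg (fun q => Polynomial.coeff (θ q) n) hRid
    rw [map_mul, map_mul, map_mul, map_pow, map_pow, map_pow, map_add, θA, θB, θQ₁, θP, θXk,
      ← map_add, ← map_pow, ← map_pow, ← map_mul, ← map_mul, Polynomial.coeff_C_mul,
      Polynomial.coeff_X_pow, if_pos rfl, mul_one] at hco
    rw [hco, map_sum, Polynomial.finset_sum_coeff]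
    have hterm : ∀ m ∈ Finset.range (n + 1),
        (θ (MvPolynomial.rename (Subtype.val : {i : I // i ≠ k} → I) (F.coeff m) *
          (A₀ + B₀) ^ m * MvPolynomial.X k ^ (N + d + n - m))).coeff n
        = (MvPolynomial.rename (Subtype.val : {i : I // i ≠ k} → I) (F.coeff m) *
            (A₀ + B₀) ^ m) * (if n = N + d + n - m then 1 else 0) := by
      intro m _
      rw [map_mul, map_mul, map_pow, map_pow, map_add, θA, θB, θren, θXk, ← map_add,
        ← map_pow, ← map_mul, Polynomial.coeff_C_mul, Polynomial.coeff_X_pow]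
    rw [Finset.sum_congr rfl hterm]
    by_cases hNd : N + d ≤ n
    · rw [Finset.sum_eq_single_of_mem (N + d) (Finset.mem_range.mpr (by omega))]
      · rw [if_pos (by omega), mul_one]
      · intro m hm hmne
        rw [if_neg (by simp only [Finset.mem_range] at hm; omega), mul_zero]
    · rw [Finset.sum_eq_zero, Polynomial.coeff_eq_zero_of_natDegree_lt (by omega : n < N + d),
        map_zero, zero_mul]
      intro m hm
      rw [if_neg (by simp only [Finset.mem_range] at hm; omega), mul_zero]
  -- specialize to a single variable
  set ψ : MvPolynomial I ℤ →+* Polynomial ℤ :=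
    MvPolynomial.eval₂Hom (Int.castRingHom (Polynomial ℤ))
      (fun i => if i = i1 then Polynomial.X else 1) with hψ
  have ψX : ∀ i : I, ψ (MvPolynomial.X i) = if i = i1 then Polynomial.X else 1 :=
    fun i => MvPolynomial.eval₂Hom_X' _ _ _
  have ψC : ∀ c : ℤ, ψ (MvPolynomial.C c) = Polynomial.C c := by
    intro c
    rw [MvPolynomial.eval₂Hom_C, eq_intCast (Int.castRingHom (Polynomial ℤ)),
      ← Polynomial.C_eq_intCast]
    norm_cast
  have ψprod : ∀ f : I → ℕ, ψ (∏ i : I, MvPolynomial.X i ^ f i) = Polynomial.X ^ f i1 := by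
    intro f
    rw [map_prod, Finset.prod_eq_single i1]
    · rw [map_pow, ψX, if_pos rfl]
    · intro i _ hi
      rw [map_pow, ψX, if_neg hi, one_pow]
    · intro h
      exact absurd (Finset.mem_univ i1) h
  have ψA : ψ A₀ = Polynomial.X ^ ea i1 := by rw [hA₀]; exact ψprod ea
  have ψB : ψ B₀ = Polynomial.X ^ ec i1 := by rw [hB₀]; exact ψprod ec
  have ψQ₁ : ψ Q₁ = Polynomial.X := by
    rw [hQ₁, map_prod, Finset.prod_eq_single (⟨i1, hi1k⟩ : {i : I // i ≠ k})]
    · rw [ψX, if_pos rfl]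
    · intro j _ hj
      rw [ψX, if_neg (fun hj1 => hj (Subtype.ext hj1))]
    · intro h
      exact absurd (Finset.mem_univ _) h
  have ψP : ψ Phat = ∑ j ∈ Finset.range (d + 1),
      Polynomial.C (p.coeff j) * (Polynomial.X ^ (ea i1 * j) * Polynomial.X ^ (ec i1 * (d - j))) := by
    rw [hPhat, map_sum]
    refine Finset.sum_congr rfl fun j _ => ?_
    rw [map_mul, map_mul, map_pow, map_pow, ψA, ψB, ψC, ← pow_mul, ← pow_mul, mul_assoc]
  have hψkey := congrArg ψ hkey
  rw [map_mul, map_mul, map_mul, map_pow, map_pow, map_pow, map_add, ψA, ψB, ψQ₁,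
    ψP, pow_add _ N d] at hψkey
  -- the two sign cases
  have hp1 : p = (1 + Polynomial.X) ^ d := by
    rcases hbi1.lt_or_gt with hneg | hpos
    · -- b i1 < 0 : use the reflected polynomial
      have ha' : ea i1 = 0 := by
        show (max (b i1) 0).toNat = 0
        rw [max_eq_right (by omega : b i1 ≤ 0)]
        rfl
      have he1 : 1 ≤ ec i1 := by
        show 1 ≤ (max (-b i1) 0).toNat
        rw [max_eq_left (by omega : (0 : ℤ) ≤ -b i1)]
        omega
      have hprd : (Polynomial.reflect d p).natDegree ≤ d := by
        refine Polynomial.natDegree_le_iff_coeff_eq_zero.mpr fun m hm => ?_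
        rw [Polynomial.coeff_reflect, Polynomial.revAt_eq_self_of_lt hm,
          Polynomial.coeff_eq_zero_of_natDegree_lt (by omega)]
      have hpr0 : (Polynomial.reflect d p).coeff 0 = 1 := by
        rw [Polynomial.coeff_reflect, Polynomial.revAt_le (Nat.zero_le d), Nat.sub_zero, hplead]
      have hprlead : (Polynomial.reflect d p).coeff d = 1 := by
        rw [Polynomial.coeff_reflect, Polynomial.revAt_le (le_refl d), Nat.sub_self, hp0]
      have hprdeg : (Polynomial.reflect d p).natDegree = d :=
        le_antisymm hprd (Polynomial.le_natDegree_of_ne_zero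
          (by rw [hprlead]; exact one_ne_zero))
      have hsum : ∑ j ∈ Finset.range (d + 1),
          Polynomial.C (p.coeff j) *
            (Polynomial.X ^ (ea i1 * j) * Polynomial.X ^ (ec i1 * (d - j)))
          = (Polynomial.reflect d p).comp (Polynomial.X ^ ec i1) := by
        calc ∑ j ∈ Finset.range (d + 1), Polynomial.C (p.coeff j) *
              (Polynomial.X ^ (ea i1 * j) * Polynomial.X ^ (ec i1 * (d - j)))
            = ∑ j ∈ Finset.range (d + 1),
                Polynomial.C (p.coeff (d - (d + 1 - 1 - j))) *
                  Polynomial.X ^ (ec i1 * (d + 1 - 1 - j)) := by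
              refine Finset.sum_congr rfl fun j hj => ?_
              simp only [Finset.mem_range] at hj
              simp only [ha', Nat.zero_mul, pow_zero, one_mul]
              have hj1 : d - (d + 1 - 1 - j) = j := by omega
              have hj2 : d + 1 - 1 - j = d - j := by omega
              rw [hj1, hj2]
          _ = ∑ j ∈ Finset.range (d + 1),
                Polynomial.C (p.coeff (d - j)) * Polynomial.X ^ (ec i1 * j) :=
              Finset.sum_range_reflect
                (fun j' => Polynomial.C (p.coeff (d - j')) * Polynomial.X ^ (ec i1 * j')) (d + 1)
          _ = ∑ j ∈ Finset.range (d + 1),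
                Polynomial.C ((Polynomial.reflect d p).coeff j) * Polynomial.X ^ (ec i1 * j) := by
              refine Finset.sum_congr rfl fun j hj => ?_
              simp only [Finset.mem_range] at hj
              rw [Polynomial.coeff_reflect, Polynomial.revAt_le (by omega : j ≤ d)]
          _ = (Polynomial.reflect d p).comp (Polynomial.X ^ ec i1) :=
              (lemS d (ec i1) (Polynomial.reflect d p) (by omega)).symm
      rw [hsum, ha', pow_zero] at hψkey
      have hXe : ((1 : Polynomial ℤ) + Polynomial.X ^ ec i1) ≠ 0 := by
        intro h
        have h2 := congrArg (fun q => Polynomial.coeff q 0) h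
        have hne : ¬ (0 : ℕ) = ec i1 := by omega
        simp only [Polynomial.coeff_add, Polynomial.coeff_one, Polynomial.coeff_X_pow,
          Polynomial.coeff_zero, hne, if_true, if_false, eq_self_iff_true] at h2
        norm_num at h2
      have hcan : Polynomial.X ^ N * (Polynomial.reflect d p).comp (Polynomial.X ^ ec i1)
          = ψ (MvPolynomial.rename (Subtype.val : {i : I // i ≠ k} → I) (F.coeff (N + d))) *
            (Polynomial.X ^ ec i1 + (1 : Polynomial ℤ)) ^ d := by
        apply mul_left_cancel₀ (pow_ne_zero N hXe)
        calc ((1 : Polynomial ℤ) + Polynomial.X ^ ec i1) ^ N *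
              (Polynomial.X ^ N * (Polynomial.reflect d p).comp (Polynomial.X ^ ec i1))
            = (1 + Polynomial.X ^ ec i1) ^ N * Polynomial.X ^ N *
              (Polynomial.reflect d p).comp (Polynomial.X ^ ec i1) := by ring
          _ = ψ (MvPolynomial.rename (Subtype.val : {i : I // i ≠ k} → I) (F.coeff (N + d))) *
              ((1 + Polynomial.X ^ ec i1) ^ N * (1 + Polynomial.X ^ ec i1) ^ d) := hψkey
          _ = (1 + Polynomial.X ^ ec i1) ^ N *
              (ψ (MvPolynomial.rename (Subtype.val : {i : I // i ≠ k} → I) (F.coeff (N + d))) *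
                (Polynomial.X ^ ec i1 + 1) ^ d) := by ring
      have hre := lemA d (ec i1) N he1 (Polynomial.reflect d p) _ hpr0 hprdeg hprlead hcan
      exact lemReflect d p (by omega) hre
    · -- 0 < b i1
      have hc' : ec i1 = 0 := by
        show (max (-b i1) 0).toNat = 0
        rw [max_eq_right (by omega : -b i1 ≤ 0)]
        rfl
      have he1 : 1 ≤ ea i1 := by
        show 1 ≤ (max (b i1) 0).toNat
        rw [max_eq_left (by omega : (0 : ℤ) ≤ b i1)]
        omega
      have hsum : ∑ j ∈ Finset.range (d + 1),
          Polynomial.C (p.coeff j) *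
            (Polynomial.X ^ (ea i1 * j) * Polynomial.X ^ (ec i1 * (d - j)))
          = p.comp (Polynomial.X ^ ea i1) := by
        rw [lemS d (ea i1) p (by omega)]
        refine Finset.sum_congr rfl fun j _ => ?_
        rw [hc', Nat.zero_mul, pow_zero, mul_one]
      rw [hsum, hc', pow_zero] at hψkey
      have hXe : (Polynomial.X ^ ea i1 + (1 : Polynomial ℤ)) ≠ 0 := by
        intro h
        have h2 := congrArg (fun q => Polynomial.coeff q 0) h
        have hne : ¬ (0 : ℕ) = ea i1 := by omega
        simp only [Polynomial.coeff_add, Polynomial.coeff_one, Polynomial.coeff_X_pow,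
          Polynomial.coeff_zero, hne, if_true, if_false, eq_self_iff_true] at h2
        norm_num at h2
      have hcan : Polynomial.X ^ N * p.comp (Polynomial.X ^ ea i1)
          = ψ (MvPolynomial.rename (Subtype.val : {i : I // i ≠ k} → I) (F.coeff (N + d))) *
            (Polynomial.X ^ ea i1 + (1 : Polynomial ℤ)) ^ d := by
        apply mul_left_cancel₀ (pow_ne_zero N hXe)
        calc (Polynomial.X ^ ea i1 + (1 : Polynomial ℤ)) ^ N *
              (Polynomial.X ^ N * p.comp (Polynomial.X ^ ea i1))
            = (Polynomial.X ^ ea i1 + 1) ^ N * Polynomial.X ^ N *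
              p.comp (Polynomial.X ^ ea i1) := by ring
          _ = ψ (MvPolynomial.rename (Subtype.val : {i : I // i ≠ k} → I) (F.coeff (N + d))) *
              ((Polynomial.X ^ ea i1 + 1) ^ N * (Polynomial.X ^ ea i1 + 1) ^ d) := hψkey
          _ = (Polynomial.X ^ ea i1 + 1) ^ N *
              (ψ (MvPolynomial.rename (Subtype.val : {i : I // i ≠ k} → I) (F.coeff (N + d))) *
                (Polynomial.X ^ ea i1 + 1) ^ d) := by ring
      exact lemA d (ea i1) N he1 p _ hp0 hpdeg hplead hcan
  refine ⟨hp1, ?_⟩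
  -- conclude z = x'^d
  have haev2 : Polynomial.aeval y p = (1 + y) ^ d := by
    rw [hp1, map_pow, map_add, map_one, Polynomial.aeval_X]
  have hx'e : x' = (1 + y) * B / x I k := by
    rw [eq_div_iff (hx0 k), hx'k, hAyB]
    ring
  rw [hz, hPi, haev2, hx'e, div_pow, mul_pow, zpow_neg, zpow_natCast, div_eq_mul_inv]
  ring

end
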